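/- Every injective graph homomorphism from the Farey graph F to itself is surjective. -/

import Mathlib

/-- A coprime pair of integers, representing a vertex of the Farey graph. -/
def FareyPair : Type := {p : ℤ × ℤ // IsCoprime p.1 p.2}

/-- The equivalence identifying a coprime pair with its negation. -/
def fareySetoid : Setoid FareyPair where
  r x y := x.val = y.val ∨ x.val = -y.val
  iseqv := by
    refine ⟨fun x => Or.inl rfl, ?_, ?_⟩
    · rintro x y (h | h)
      · exact Or.inl h.symm
      · exact Or.inr (by rw [h, neg_neg])
    · rintro x y z (h1 | h1) (h2 | h2)
      · exact Or.inl (h1.trans h2)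
      · exact Or.inr (by rw [h1, h2])
      · exact Or.inr (by rw [h1, h2])
      · exact Or.inl (by rw [h1, h2, neg_neg])

/-- A vertex of the Farey graph: a coprime pair of integers up to simultaneous
negation. -/
def FareyVertex : Type := Quotient fareySetoid

/-- The vertex `[p:q]` of the Farey graph. -/
def fareyMk (p q : ℤ) (h : IsCoprime p q) : FareyVertex :=
  Quotient.mk fareySetoid ⟨(p, q), h⟩

/-- The determinant `p * s - q * r` of two pairs `(p, q)` and `(r, s)`. -/
def fareyDet (x y : FareyPair) : ℤ := x.val.1 * y.val.2 - x.val.2 * y.val.1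

private lemma farey_abs_helper (a b : ℤ) (h : a = b ∨ a = -b) :
    (|a| = 1) = (|b| = 1) := by
  rcases h with h | h <;> (rw [h]; try simp)

/-- The Farey graph: vertices `[p:q]` and `[r:s]` are adjacent iff `|ps - qr| = 1`. -/
def FareyGraph : SimpleGraph FareyVertex where
  Adj := Quotient.lift₂ (fun x y => |fareyDet x y| = 1) (by
    rintro x y x' y' (h1 | h1) (h2 | h2) <;> apply farey_abs_helper
    · exact Or.inl (by simp only [fareyDet, h1, h2])
    · refine Or.inr ?_
      simp only [fareyDet, h1, h2, Prod.fst_neg, Prod.snd_neg]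
      ring
    · refine Or.inr ?_
      simp only [fareyDet, h1, h2, Prod.fst_neg, Prod.snd_neg]
      ring
    · refine Or.inl ?_
      simp only [fareyDet, h1, h2, Prod.fst_neg, Prod.snd_neg]
      ring)
  symm := by
    constructor
    intro u v
    refine Quotient.inductionOn₂ u v ?_
    intro x y h
    change |fareyDet x y| = 1 at h
    change |fareyDet y x| = 1
    rw [show fareyDet y x = -fareyDet x y from by simp only [fareyDet]; ring,
      abs_neg]
    exact h
  loopless := by
    constructor
    intro u
    refine Quotient.inductionOn u ?_
    intro x h
    change |fareyDet x x| = 1 at h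
    rw [show fareyDet x x = 0 from by simp only [fareyDet]; ring] at h
    simp at h

noncomputable instance : DecidableEq FareyVertex := Classical.decEq _

/-! An injective homomorphism `f` sends the two triangles on an edge `a b` to two distinct
triangles on `f a f b`; since every edge of the Farey graph lies in exactly two triangles, these
are all of them. Hence the edges in the image of `f` are closed under moving to another edge of an
adjacent triangle. Any two edges of the Farey graph are joined by such moves (Euclid's algorithm),
so every edge, and with it every vertex, lies in the image. -/

open Function Relation

namespace SimpleGraph

variable {V W : Type*} {G : SimpleGraph V} {H : SimpleGraph W}

inductive TriangleMove (G : SimpleGraph V) : V × V → V × V → Prop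
  | swap {u v : V} : G.Adj u v → G.TriangleMove (u, v) (v, u)
  | pivot {u v w : V} : G.Adj u v → G.Adj u w → G.Adj v w → G.TriangleMove (u, v) (u, w)

instance : Std.Symm G.TriangleMove where
  symm _ _ h := by
    cases h with
    | swap huv => exact .swap huv.symm
    | pivot huv huw hvw => exact .pivot huw huv hvw.symm

theorem Hom.image_commonNeighbors_eq (f : G →g H) (hf : Injective f) {a b : V}
    (hG : 2 ≤ (G.commonNeighbors a b).encard)
    (hH : (H.commonNeighbors (f a) (f b)).encard ≤ 2) :
    f '' G.commonNeighbors a b = H.commonNeighbors (f a) (f b) := by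
  have hsub : f '' G.commonNeighbors a b ⊆ H.commonNeighbors (f a) (f b) := by
    rintro _ ⟨c, hc, rfl⟩
    exact ⟨f.map_adj hc.1, f.map_adj hc.2⟩
  refine (Set.finite_of_encard_le_coe hH).subset hsub |>.eq_of_subset_of_encard_le hsub ?_
  rw [hf.injOn.encard_image]
  exact hH.trans hG

theorem Hom.exists_map_eq_of_triangleMove (f : G →g H) (hf : Injective f)
    (hG : ∀ a b, G.Adj a b → 2 ≤ (G.commonNeighbors a b).encard)
    (hH : ∀ u v, H.Adj u v → (H.commonNeighbors u v).encard ≤ 2)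
    {e e' : W × W} (hmove : H.TriangleMove e e') (he : ∃ a b, G.Adj a b ∧ (f a, f b) = e) :
    ∃ a b, G.Adj a b ∧ (f a, f b) = e' := by
  obtain ⟨a, b, hab, rfl⟩ := he
  cases hmove with
  | swap _ => exact ⟨b, a, hab.symm, rfl⟩
  | @pivot _ _ w huv huw hvw =>
    have hw : w ∈ f '' G.commonNeighbors a b := by
      rw [f.image_commonNeighbors_eq hf (hG a b hab) (hH _ _ huv)]
      exact ⟨huw, hvw⟩
    obtain ⟨c, hc, rfl⟩ := hw
    exact ⟨a, c, hc.1, rfl⟩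

theorem Hom.surjective_of_injective
    (hcommon : ∀ u v, G.Adj u v → (G.commonNeighbors u v).encard = 2)
    (hmove : ∀ e e' : V × V, G.Adj e.1 e.2 → G.Adj e'.1 e'.2 →
      ReflTransGen G.TriangleMove e e')
    (hnbr : ∀ v, ∃ w, G.Adj v w) (f : G →g G) (hf : Injective f) : Surjective f := by
  intro v
  obtain ⟨w, hvw⟩ := hnbr v
  have himage : ∀ e, ReflTransGen G.TriangleMove (f v, f w) e →
      ∃ a b, G.Adj a b ∧ (f a, f b) = e := by
    intro e he
    induction he with
    | refl => exact ⟨v, w, hvw, rfl⟩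
    | tail _ hstep ih =>
      exact f.exists_map_eq_of_triangleMove hf (fun a b h ↦ (hcommon a b h).ge)
        (fun a b h ↦ (hcommon a b h).le) hstep ih
  obtain ⟨a, b, -, hab⟩ := himage (v, w) (hmove _ _ (f.map_adj hvw) hvw)
  exact ⟨a, congrArg Prod.fst hab⟩

end SimpleGraph

namespace Farey

open SimpleGraph

def det (x y : ℤ × ℤ) : ℤ := x.1 * y.2 - x.2 * y.1

theorem det_swap (x y : ℤ × ℤ) : det y x = -det x y := by
  simp only [det]; ring

@[simp] theorem det_self (x : ℤ × ℤ) : det x x = 0 := by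
  simp only [det]; ring

@[simp] theorem det_add_right (x y z : ℤ × ℤ) : det x (y + z) = det x y + det x z := by
  simp only [det, Prod.fst_add, Prod.snd_add]; ring

@[simp] theorem det_sub_right (x y z : ℤ × ℤ) : det x (y - z) = det x y - det x z := by
  simp only [det, Prod.fst_sub, Prod.snd_sub]; ring

@[simp] theorem det_smul_right (k : ℤ) (x y : ℤ × ℤ) : det x (k • y) = k * det x y := by
  simp only [det, Prod.smul_fst, Prod.smul_snd, smul_eq_mul]; ring

theorem det_add_zsmul_self (x y : ℤ × ℤ) (k : ℤ) : det x (y + k • x) = det x y := by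
  rw [det_add_right, det_smul_right, det_self, mul_zero, add_zero]

theorem isCoprime_of_abs_det_eq_one {x y : ℤ × ℤ} (h : |det x y| = 1) :
    IsCoprime x.1 x.2 := by
  rcases (abs_eq zero_le_one).mp h with h | h <;> rw [det] at h
  · exact ⟨y.2, -y.1, by linarith⟩
  · exact ⟨-y.2, y.1, by linarith⟩

/-- The vertex `[x.1 : x.2]`; a non-coprime pair is sent to the junk value `[1 : 0]`. -/
noncomputable def mk (x : ℤ × ℤ) : FareyVertex :=
  if h : IsCoprime x.1 x.2 then fareyMk x.1 x.2 h else fareyMk 1 0 isCoprime_one_left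

theorem mk_of_isCoprime {x : ℤ × ℤ} (h : IsCoprime x.1 x.2) :
    mk x = Quotient.mk fareySetoid ⟨x, h⟩ :=
  dif_pos h

theorem exists_eq_mk (u : FareyVertex) : ∃ x : ℤ × ℤ, IsCoprime x.1 x.2 ∧ u = mk x :=
  Quotient.inductionOn u fun ⟨x, hx⟩ ↦ ⟨x, hx, (mk_of_isCoprime hx).symm⟩

theorem mk_neg (x : ℤ × ℤ) : mk (-x) = mk x := by
  by_cases h : IsCoprime x.1 x.2
  · have h' : IsCoprime (-x).1 (-x).2 := (IsCoprime.neg_neg_iff _ _).mpr h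
    rw [mk_of_isCoprime h, mk_of_isCoprime h']
    exact Quotient.sound (Or.inr rfl)
  · have h' : ¬IsCoprime (-x).1 (-x).2 := by
      rwa [Prod.fst_neg, Prod.snd_neg, IsCoprime.neg_neg_iff]
    rw [mk, mk, dif_neg h, dif_neg h']

theorem adj_mk_iff {x y : ℤ × ℤ} (hx : IsCoprime x.1 x.2) (hy : IsCoprime y.1 y.2) :
    FareyGraph.Adj (mk x) (mk y) ↔ |det x y| = 1 := by
  rw [mk_of_isCoprime hx, mk_of_isCoprime hy]
  rfl

theorem adj_mk_of_abs_det {x y : ℤ × ℤ} (h : |det x y| = 1) : FareyGraph.Adj (mk x) (mk y) :=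
  have h' : |det y x| = 1 := by rwa [det_swap, abs_neg]
  (adj_mk_iff (isCoprime_of_abs_det_eq_one h) (isCoprime_of_abs_det_eq_one h')).mpr h

/-- The Cramer identity `det x y • z = det z y • x + det x z • y` forces `z = ±x ± y`. -/
theorem eq_add_or_eq_sub_of_abs_det {x y z : ℤ × ℤ} (hxy : |det x y| = 1) (hxz : |det x z| = 1)
    (hyz : |det y z| = 1) : z = x + y ∨ z = x - y ∨ z = -(x + y) ∨ z = -(x - y) := by
  have e1 : det x y * z.1 = -det y z * x.1 + det x z * y.1 := by simp only [det]; ring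
  have e2 : det x y * z.2 = -det y z * x.2 + det x z * y.2 := by simp only [det]; ring
  simp only [Prod.ext_iff, Prod.fst_add, Prod.snd_add, Prod.fst_sub, Prod.snd_sub, Prod.fst_neg,
    Prod.snd_neg]
  rw [abs_eq zero_le_one] at hxy hxz hyz
  rcases hxy with h1 | h1 <;> rcases hxz with h2 | h2 <;> rcases hyz with h3 | h3 <;>
    rw [h1, h2, h3] at e1 e2 <;> omega

theorem mk_add_ne_mk_sub {x y : ℤ × ℤ} (h : |det x y| = 1) : mk (x + y) ≠ mk (x - y) := by
  have hadd : |det (x + y) x| = 1 := by rw [det_swap, abs_neg]; simpa using h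
  have hsub : |det (x - y) x| = 1 := by rw [det_swap, abs_neg]; simpa using h
  rw [mk_of_isCoprime (isCoprime_of_abs_det_eq_one hadd),
    mk_of_isCoprime (isCoprime_of_abs_det_eq_one hsub)]
  intro heq
  have hzero : x = 0 ∨ y = 0 := by
    rcases Quotient.exact heq with heq | heq <;>
    · simp only [Prod.ext_iff, Prod.fst_add, Prod.snd_add, Prod.fst_sub, Prod.snd_sub,
        Prod.fst_neg, Prod.snd_neg, Prod.fst_zero, Prod.snd_zero] at heq ⊢
      omega
  rcases hzero with rfl | rfl <;> simp [det] at h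

theorem commonNeighbors_mk {x y : ℤ × ℤ} (h : |det x y| = 1) :
    FareyGraph.commonNeighbors (mk x) (mk y) = {mk (x + y), mk (x - y)} := by
  ext w
  rw [mem_commonNeighbors, Set.mem_insert_iff, Set.mem_singleton_iff]
  constructor
  · rintro ⟨hxw, hyw⟩
    obtain ⟨z, hz, rfl⟩ := exists_eq_mk w
    have hx := isCoprime_of_abs_det_eq_one h
    have hy := isCoprime_of_abs_det_eq_one (x := y) (y := x) (by rw [det_swap, abs_neg, h])
    rw [adj_mk_iff hx hz] at hxw
    rw [adj_mk_iff hy hz] at hyw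
    rcases eq_add_or_eq_sub_of_abs_det h hxw hyw with rfl | rfl | rfl | rfl <;>
      simp only [mk_neg, true_or, or_true]
  · rintro (rfl | rfl) <;>
      exact ⟨adj_mk_of_abs_det (by simp [h]), adj_mk_of_abs_det (by simp [det_swap x y, h])⟩

theorem encard_commonNeighbors {u v : FareyVertex} (h : FareyGraph.Adj u v) :
    (FareyGraph.commonNeighbors u v).encard = 2 := by
  obtain ⟨x, hx, rfl⟩ := exists_eq_mk u
  obtain ⟨y, hy, rfl⟩ := exists_eq_mk v
  have hxy := (adj_mk_iff hx hy).mp h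
  rw [commonNeighbors_mk hxy, Set.encard_pair (mk_add_ne_mk_sub hxy)]

theorem exists_adj (u : FareyVertex) : ∃ v, FareyGraph.Adj u v := by
  obtain ⟨x, ⟨a, b, hab⟩, rfl⟩ := exists_eq_mk u
  refine ⟨mk (-b, a), adj_mk_of_abs_det ?_⟩
  rw [show det x (-b, a) = a * x.1 + b * x.2 by simp only [det]; ring, hab, abs_one]

theorem mk_smul_of_isUnit {ε : ℤ} (hε : IsUnit ε) (x : ℤ × ℤ) : mk (ε • x) = mk x := by
  rcases Int.isUnit_iff.mp hε with rfl | rfl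
  · rw [one_smul]
  · rw [neg_one_smul, mk_neg]

theorem triangleMove_add {x y : ℤ × ℤ} (h : |det x y| = 1) :
    FareyGraph.TriangleMove (mk x, mk y) (mk x, mk (y + x)) :=
  .pivot (adj_mk_of_abs_det h) (adj_mk_of_abs_det (by simp [h]))
    (adj_mk_of_abs_det (by simp [det_swap x y, h]))

theorem triangleMove_sub {x y : ℤ × ℤ} (h : |det x y| = 1) :
    FareyGraph.TriangleMove (mk x, mk y) (mk x, mk (y - x)) :=
  .pivot (adj_mk_of_abs_det h) (adj_mk_of_abs_det (by simp [h]))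
    (adj_mk_of_abs_det (by simp [det_swap x y, h]))

theorem reflTransGen_add_zsmul {x y : ℤ × ℤ} (h : |det x y| = 1) (k : ℤ) :
    ReflTransGen FareyGraph.TriangleMove (mk x, mk y) (mk x, mk (y + k • x)) := by
  induction k using Int.induction_on with
  | zero => rw [zero_smul, add_zero]
  | succ i ih =>
    rw [show y + (i + 1 : ℤ) • x = y + (i : ℤ) • x + x by module]
    exact ih.tail (triangleMove_add (by rwa [det_add_zsmul_self]))
  | pred i ih =>
    rw [show y + (-i - 1 : ℤ) • x = y + (-i : ℤ) • x - x by module]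
    exact ih.tail (triangleMove_sub (by rwa [det_add_zsmul_self]))

theorem reflTransGen_of_snd_eq_zero {x y : ℤ × ℤ} (hx : x.2 = 0) (h : |det x y| = 1) :
    ReflTransGen FareyGraph.TriangleMove (mk (1, 0), mk (0, 1)) (mk x, mk y) := by
  obtain ⟨hx1, hy2⟩ : IsUnit x.1 ∧ IsUnit y.2 := by
    rw [← IsUnit.mul_iff, Int.isUnit_iff_abs_eq]
    simpa [det, hx] using h
  have hx' : x.1 • x = (1, 0) := by
    ext <;> simp [hx, Int.isUnit_mul_self hx1]
  have hy' : y.2 • y = (0, 1) + (y.1 * y.2) • (1, 0) := by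
    ext <;> simp [Int.isUnit_mul_self hy2, mul_comm]
  rw [← mk_smul_of_isUnit hx1 x, ← mk_smul_of_isUnit hy2 y, hx', hy']
  exact reflTransGen_add_zsmul (by simp [det]) _

/-- Euclid's algorithm on the second coordinates. -/
theorem reflTransGen_of_abs_det {x y : ℤ × ℤ} (h : |det x y| = 1) :
    ReflTransGen FareyGraph.TriangleMove (mk (1, 0), mk (0, 1)) (mk x, mk y) := by
  induction hn : x.2.natAbs using Nat.strong_induction_on generalizing x y with
  | _ n ih =>
  by_cases hx2 : x.2 = 0
  · exact reflTransGen_of_snd_eq_zero hx2 h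
  set q := y.2 / x.2
  set r := y + (-q) • x with hr
  have hrx : |det r x| = 1 := by rwa [det_swap, abs_neg, det_add_zsmul_self]
  have hlt : r.2.natAbs < n := by
    have hmod : r.2 = y.2 % x.2 := by simp [hr, q, Int.emod_def, mul_comm, sub_eq_add_neg]
    have hlt := Int.emod_lt_abs y.2 hx2
    have hnonneg := Int.emod_nonneg y.2 hx2
    rw [Int.abs_eq_natAbs] at hlt
    omega
  have hxr := (ih _ hlt hrx rfl).tail (.swap (adj_mk_of_abs_det hrx))
  have hy : r + q • x = y := by rw [hr]; module
  rw [← hy]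
  exact hxr.trans (reflTransGen_add_zsmul (by rwa [det_swap, abs_neg]) q)

theorem reflTransGen_of_adj {u v : FareyVertex} (h : FareyGraph.Adj u v) :
    ReflTransGen FareyGraph.TriangleMove (mk (1, 0), mk (0, 1)) (u, v) := by
  obtain ⟨x, hx, rfl⟩ := exists_eq_mk u
  obtain ⟨y, hy, rfl⟩ := exists_eq_mk v
  exact reflTransGen_of_abs_det ((adj_mk_iff hx hy).mp h)

theorem reflTransGen_triangleMove (e e' : FareyVertex × FareyVertex)
    (he : FareyGraph.Adj e.1 e.2) (he' : FareyGraph.Adj e'.1 e'.2) :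
    ReflTransGen FareyGraph.TriangleMove e e' :=
  (symm_of _ (reflTransGen_of_adj he)).trans (reflTransGen_of_adj he')

end Farey

/-- Every injective graph homomorphism from the Farey graph to itself is
surjective. -/
theorem fareyGraph_injective_hom_surjective (f : FareyVertex → FareyVertex)
    (hhom : ∀ u v : FareyVertex, FareyGraph.Adj u v → FareyGraph.Adj (f u) (f v))
    (hinj : Function.Injective f) :
    Function.Surjective f :=
  SimpleGraph.Hom.surjective_of_injective (fun _ _ ↦ Farey.encard_commonNeighbors)
    Farey.reflTransGen_triangleMove Farey.exists_adj ⟨f, hhom _ _⟩ hinj
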